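/- arXiv:2408.02435 — 2 statements merged into one kernel-verified Lean document; each statement's English description precedes it below -/
import Mathlib

section
/- Let C = (G, M, I) be a formal context with intent set INT and extent set EXT. Let C★ = (G, M, I★) where I★ = I \ {(g,m) : g ∈ G} for a fixed attribute m ∈ M (the occurrences of m are removed but m stays in the attribute set), with intent set INT★ and extent set EXT★. If (∅, M) is a concept of C, then INT★ = {B \ {m} : B ∈ INT, B ≠ M} ∪ {M} and EXT★ ⊆ EXT. -/
variable {G M : Type*}

/-- Attribute derivation of a set of objects, relative to attribute carrier `atts`. -/
def attUp (atts : Set M) (I : Set (G × M)) (A : Set G) : Set M :=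
  {m ∈ atts | ∀ g ∈ A, (g, m) ∈ I}

/-- Object derivation of a set of attributes. -/
def objDown (I : Set (G × M)) (Bs : Set M) : Set G :=
  {g | ∀ m ∈ Bs, (g, m) ∈ I}

/-- `(A, Bs)` is a formal concept of the context with attribute set `atts` and incidence `I`. -/
def IsConcept (atts : Set M) (I : Set (G × M)) (A : Set G) (Bs : Set M) : Prop :=
  attUp atts I A = Bs ∧ objDown I Bs = A

/-- The set of intents. -/
def intents (atts : Set M) (I : Set (G × M)) : Set (Set M) :=
  {Bs | ∃ A, IsConcept atts I A Bs}

/-- The set of extents. -/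
def extents (atts : Set M) (I : Set (G × M)) : Set (Set G) :=
  {A | ∃ Bs, IsConcept atts I A Bs}

lemma attUp_subset (Ms : Set M) (I : Set (G × M)) (A : Set G) : attUp Ms I A ⊆ Ms :=
  fun _ hn => hn.1

lemma subset_objDown_attUp (Ms : Set M) (I : Set (G × M)) (A : Set G) :
    A ⊆ objDown I (attUp Ms I A) :=
  fun g hg n hn => hn.2 g hg

lemma subset_attUp_objDown (Ms : Set M) (I : Set (G × M)) (B : Set M) (hB : B ⊆ Ms) :
    B ⊆ attUp Ms I (objDown I B) :=
  fun n hn => ⟨hB hn, fun _ hg => hg n hn⟩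

lemma objDown_anti (I : Set (G × M)) {B B' : Set M} (h : B ⊆ B') :
    objDown I B' ⊆ objDown I B :=
  fun g hg n hn => hg n (h hn)

lemma attUp_anti (Ms : Set M) (I : Set (G × M)) {A A' : Set G} (h : A ⊆ A') :
    attUp Ms I A' ⊆ attUp Ms I A :=
  fun n hn => ⟨hn.1, fun g hg => hn.2 g (h hg)⟩

lemma attUp_objDown_attUp (Ms : Set M) (I : Set (G × M)) (A : Set G) :
    attUp Ms I (objDown I (attUp Ms I A)) = attUp Ms I A :=
  Set.Subset.antisymm (attUp_anti Ms I (subset_objDown_attUp Ms I A))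
    (subset_attUp_objDown Ms I _ (attUp_subset Ms I A))

lemma attUp_empty (Ms : Set M) (I : Set (G × M)) : attUp Ms I (∅ : Set G) = Ms := by
  ext n; simp [attUp]

-- star-context lemmas
lemma star_attUp (Ms : Set M) (I : Set (G × M)) (m : M) {A : Set G} (hA : A.Nonempty) :
    attUp Ms {p ∈ I | p.2 ≠ m} A = attUp Ms I A \ {m} := by
  obtain ⟨g₀, hg₀⟩ := hA
  ext n
  constructor
  · rintro ⟨h1, h2⟩
    exact ⟨⟨h1, fun g hg => (h2 g hg).1⟩, (h2 g₀ hg₀).2⟩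
  · rintro ⟨⟨h1, h2⟩, h3⟩
    exact ⟨h1, fun g hg => ⟨h2 g hg, h3⟩⟩

lemma star_objDown_of_not_mem (I : Set (G × M)) (m : M) {B : Set M} (hB : m ∉ B) :
    objDown {p ∈ I | p.2 ≠ m} B = objDown I B := by
  ext g
  constructor
  · exact fun h n hn => (h n hn).1
  · exact fun h n hn => ⟨h n hn, fun hnm => hB (hnm ▸ hn)⟩

lemma star_objDown_of_mem (I : Set (G × M)) (m : M) {B : Set M} (hB : m ∈ B) :
    objDown {p ∈ I | p.2 ≠ m} B = ∅ := by
  ext g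
  simp only [Set.mem_empty_iff_false, iff_false]
  intro h
  exact (h m hB).2 rfl

theorem stmt2 (Ms : Set M) (I : Set (G × M)) (m : M) (hm : m ∈ Ms)
    (hI : ∀ p ∈ I, p.2 ∈ Ms) (hconc : IsConcept Ms I ∅ Ms) :
    intents Ms {p ∈ I | p.2 ≠ m} =
      ((fun Bs => Bs \ {m}) '' {Bs ∈ intents Ms I | Bs ≠ Ms}) ∪ {Ms} ∧
    extents Ms {p ∈ I | p.2 ≠ m} ⊆ extents Ms I := by
  set J : Set (G × M) := {p ∈ I | p.2 ≠ m} with hJ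
  have hMsdown : objDown I Ms = ∅ := hconc.2
  constructor
  · ext B'
    constructor
    · rintro ⟨A, hA1, hA2⟩
      rcases Set.eq_empty_or_nonempty A with hA | hA
      · -- A = ∅ : B' = Ms
        right
        subst hA
        have : B' = Ms := by rw [← hA1, attUp_empty]
        simp [this]
      · -- A nonempty
        left
        set B := attUp Ms I A with hB
        have hBint : B ∈ intents Ms I :=
          ⟨objDown I B, attUp_objDown_attUp Ms I A, rfl⟩
        have hBne : B ≠ Ms := by
          intro hEq
          have h1 : A ⊆ objDown I B := subset_objDown_attUp Ms I A
          rw [hEq, hMsdown] at h1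
          exact hA.ne_empty (Set.subset_empty_iff.mp h1)
        refine ⟨B, ⟨hBint, hBne⟩, ?_⟩
        simp only
        rw [← hA1, star_attUp Ms I m hA]
    · rintro (⟨B, ⟨⟨A, h1, h2⟩, hBne⟩, hBeq⟩ | hB')
      · -- B' = B \ {m} for intent B ≠ Ms
        simp only at hBeq
        subst hBeq
        set D := B \ {m} with hD
        have hmD : m ∉ D := fun h => h.2 rfl
        have hBMs : B ⊆ Ms := h1 ▸ attUp_subset Ms I A
        set A' := objDown I D with hA'
        have hAne : A.Nonempty := by
          rcases Set.eq_empty_or_nonempty A with hA | hA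
          · exfalso; apply hBne; rw [← h1, hA, attUp_empty]
          · exact hA
        have hAA' : A ⊆ A' := h2 ▸ objDown_anti I Set.diff_subset
        have hA'ne : A'.Nonempty := hAne.mono hAA'
        have hsub : attUp Ms I A' ⊆ B := by
          have : objDown I B ⊆ A' := objDown_anti I Set.diff_subset
          calc attUp Ms I A' ⊆ attUp Ms I (objDown I B) := attUp_anti Ms I this
            _ = attUp Ms I A := by rw [h2]
            _ = B := h1
        have hDsub : D ⊆ attUp Ms I A' :=
          subset_attUp_objDown Ms I D (Set.diff_subset.trans hBMs)
        refine ⟨A', ?_, star_objDown_of_not_mem I m hmD⟩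
        rw [star_attUp Ms I m hA'ne]
        apply Set.Subset.antisymm
        · exact fun n hn => ⟨hsub hn.1, hn.2⟩
        · exact fun n hn => ⟨hDsub hn, hn.2⟩
      · -- B' = Ms
        have hB'Ms : B' = Ms := hB'
        rw [hB'Ms]
        exact ⟨∅, attUp_empty Ms J, star_objDown_of_mem I m hm⟩
  · rintro A ⟨B', h1, h2⟩
    refine ⟨attUp Ms I A, rfl, ?_⟩
    apply Set.Subset.antisymm _ (subset_objDown_attUp Ms I A)
    by_cases hmB : m ∈ B'
    · have hAempty : A = ∅ := by rw [← h2, star_objDown_of_mem I m hmB]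
      subst hAempty
      rw [attUp_empty, hMsdown]
    · intro g hg
      rw [← h2]
      intro n hn
      have hn' : n ∈ attUp Ms J A := h1 ▸ hn
      have hnm : n ≠ m := fun h => hmB (h ▸ hn)
      have hnI : n ∈ attUp Ms I A := ⟨hn'.1, fun h hh => (hn'.2 h hh).1⟩
      exact ⟨hg n hnI, hnm⟩
end

section
/- Let C = (G, M, I) be a formal context with stem base L, and C* = (G, M \ {m}, I*) obtained by deleting the column of attribute m, with stem base L*. If A → B is in L with m ∈ B, m ∉ A, and A ≠ B \ {m}, then A → B \ {m} is in L*. -/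
variable {G M : Type*} [Fintype G] [DecidableEq G] [Fintype M] [DecidableEq M]

/-- Attribute derivation, relative to attribute carrier `atts`. -/
def fUp (atts : Finset M) (I : Finset (G × M)) (A : Finset G) : Finset M :=
  atts.filter fun m => ∀ g ∈ A, (g, m) ∈ I

/-- Object derivation. -/
def fDown (I : Finset (G × M)) (Bs : Finset M) : Finset G :=
  Finset.univ.filter fun g => ∀ m ∈ Bs, (g, m) ∈ I

/-- The closure `X ↦ X''` on attribute sets. -/
def fCl (atts : Finset M) (I : Finset (G × M)) (X : Finset M) : Finset M :=
  fUp atts I (fDown I X)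

/-- `P` is a pseudo-intent of the context with attribute set `atts` and incidence `I`. -/
def Pseudo (atts : Finset M) (I : Finset (G × M)) (P : Finset M) : Prop :=
  P ⊆ atts ∧ P ≠ fCl atts I P ∧ ∀ Q, Q ⊂ P → Pseudo atts I Q → fCl atts I Q ⊆ P
termination_by P.card
decreasing_by exact Finset.card_lt_card ‹_›

/-- The intents of the context. -/
def fIntents (atts : Finset M) (I : Finset (G × M)) : Set (Finset M) :=
  {Bs | ∃ A, fUp atts I A = Bs ∧ fDown I Bs = A}

lemma pseudo_iff (atts : Finset M) (I : Finset (G × M)) (P : Finset M) :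
    Pseudo atts I P ↔
      P ⊆ atts ∧ P ≠ fCl atts I P ∧ ∀ Q, Q ⊂ P → Pseudo atts I Q → fCl atts I Q ⊆ P := by
  rw [Pseudo]

lemma fDown_filter (I : Finset (G × M)) (m : M) (X : Finset M) (hmX : m ∉ X) :
    fDown (I.filter fun p => p.2 ≠ m) X = fDown I X := by
  unfold fDown
  ext g
  simp only [Finset.mem_filter, Finset.mem_univ, true_and]
  constructor
  · intro h m' hm'
    exact (h m' hm').1
  · intro h m' hm'
    exact ⟨h m' hm', fun e => hmX (e ▸ hm')⟩

lemma fUp_filter (Ms : Finset M) (I : Finset (G × M)) (m : M) (A : Finset G) :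
    fUp (Ms.erase m) (I.filter fun p => p.2 ≠ m) A = (fUp Ms I A).erase m := by
  unfold fUp
  ext m'
  simp only [Finset.mem_filter, Finset.mem_erase]
  constructor
  · rintro ⟨⟨hne, hMs⟩, h⟩
    exact ⟨hne, hMs, fun g hg => (h g hg).1⟩
  · rintro ⟨hne, hMs, h⟩
    exact ⟨⟨hne, hMs⟩, fun g hg => ⟨h g hg, hne⟩⟩

lemma fCl_star (Ms : Finset M) (I : Finset (G × M)) (m : M) (X : Finset M) (hmX : m ∉ X) :
    fCl (Ms.erase m) (I.filter fun p => p.2 ≠ m) X = (fCl Ms I X).erase m := by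
  unfold fCl
  rw [fDown_filter I m X hmX, fUp_filter]

/-- Key lemma: below a pseudo-intent `A` avoiding `m`, pseudo-intents of the original
context and of the context with column `m` removed coincide. -/
lemma pseudo_below_iff (Ms : Finset M) (I : Finset (G × M)) (m : M)
    (A : Finset M) (hA : Pseudo Ms I A) (hmA : m ∉ A) :
    ∀ Q : Finset M, Q ⊂ A →
      (Pseudo Ms I Q ↔ Pseudo (Ms.erase m) (I.filter fun p => p.2 ≠ m) Q) := by
  intro Q
  induction Q using Finset.strongInduction with
  | _ Q IH =>
    intro hQA
    have hmQ : m ∉ Q := fun h => hmA (hQA.subset h)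
    constructor
    · intro hQ
      have hclQ : fCl Ms I Q ⊆ A := (pseudo_iff Ms I A).mp hA |>.2.2 Q hQA hQ
      have hmcl : m ∉ fCl Ms I Q := fun h => hmA (hclQ h)
      obtain ⟨h1, h2, h3⟩ := (pseudo_iff Ms I Q).mp hQ
      rw [pseudo_iff]
      refine ⟨Finset.subset_erase.mpr ⟨h1, hmQ⟩, ?_, ?_⟩
      · rw [fCl_star Ms I m Q hmQ, Finset.erase_eq_of_notMem hmcl]
        exact h2
      · intro S hSQ hS
        have hSA : S ⊂ A := hSQ.trans hQA
        have hS' : Pseudo Ms I S := (IH S hSQ hSA).mpr hS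
        have : fCl Ms I S ⊆ Q := h3 S hSQ hS'
        have hmS : m ∉ S := fun h => hmA (hSA.subset h)
        rw [fCl_star Ms I m S hmS]
        exact (Finset.erase_subset m _).trans this
    · intro hQ
      obtain ⟨h1, h2, h3⟩ := (pseudo_iff _ _ Q).mp hQ
      rw [pseudo_iff]
      refine ⟨h1.trans (Finset.erase_subset m Ms), ?_, ?_⟩
      · intro heq
        apply h2
        rw [fCl_star Ms I m Q hmQ, ← heq, Finset.erase_eq_of_notMem hmQ]
      · intro R hRQ hR
        have hRA : R ⊂ A := hRQ.trans hQA
        have hmR : m ∉ R := fun h => hmA (hRA.subset h)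
        have hR' : Pseudo (Ms.erase m) (I.filter fun p => p.2 ≠ m) R :=
          (IH R hRQ hRA).mp hR
        have hsub : fCl (Ms.erase m) (I.filter fun p => p.2 ≠ m) R ⊆ Q := h3 R hRQ hR'
        rw [fCl_star Ms I m R hmR] at hsub
        have hclR : fCl Ms I R ⊆ A := (pseudo_iff Ms I A).mp hA |>.2.2 R hRA hR
        have hmcl : m ∉ fCl Ms I R := fun h => hmA (hclR h)
        rwa [Finset.erase_eq_of_notMem hmcl] at hsub

theorem stmt12 (Ms : Finset M) (I : Finset (G × M)) (m : M) (hm : m ∈ Ms)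
    (hI : ∀ p ∈ I, p.2 ∈ Ms)
    (A B : Finset M) (hA : Pseudo Ms I A) (hB : B = fCl Ms I A)
    (hmB : m ∈ B) (hmA : m ∉ A) (hne : A ≠ B.erase m) :
    Pseudo (Ms.erase m) (I.filter fun p => p.2 ≠ m) A ∧
    fCl (Ms.erase m) (I.filter fun p => p.2 ≠ m) A = B.erase m := by
  obtain ⟨h1, h2, h3⟩ := (pseudo_iff Ms I A).mp hA
  have hcl : fCl (Ms.erase m) (I.filter fun p => p.2 ≠ m) A = B.erase m := by
    rw [fCl_star Ms I m A hmA, hB]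
  refine ⟨?_, hcl⟩
  rw [pseudo_iff]
  refine ⟨Finset.subset_erase.mpr ⟨h1, hmA⟩, ?_, ?_⟩
  · rw [hcl]; exact hne
  · intro Q hQA hQ
    have hQ' : Pseudo Ms I Q := (pseudo_below_iff Ms I m A hA hmA Q hQA).mpr hQ
    have hmQ : m ∉ Q := fun h => hmA (hQA.subset h)
    have hsub : fCl Ms I Q ⊆ A := h3 Q hQA hQ'
    rw [fCl_star Ms I m Q hmQ]
    exact (Finset.erase_subset m _).trans hsub
end
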